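/- For nonnegative integers k <= n and positive integer m: sum_{i=k}^n [i choose k]_q * q^i/(1-q^i) * sum over chains i <= i_2 <= ... <= i_m <= n of q^{i_2+...+i_m}/((1-q^{i_2})...(1-q^{i_m})) = [n choose k]_q * q^{km}/(1-q^k)^m. -/

import Mathlib

/-! Put `x i = q ^ i / (1 - q ^ i)`; the chain sum is then the complete homogeneous symmetric
function `h_{m-1}(x_i, …, x_n)`. For `m = 1` the claim is the `q`-hockey-stick identity
`∑_{i=k}^n [i choose k]_q x_i = [n choose k]_q x_k`, proved by induction on `n`. For larger `m`,
split off the smallest index `j` of the chain and exchange the two sums: the inner sum over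
`k ≤ i ≤ j` is `[j choose k]_q x_k` by the hockey-stick identity, so every further level of the
chain contributes one more factor `x_k`. -/

open Finset

variable {F : Type*} [Field F]

/-- `(q;q)_n = (1-q)(1-q^2)...(1-q^n)` -/
def qfac (q : F) (n : ℕ) : F := ∏ j ∈ Finset.range n, (1 - q ^ (j + 1))

/-- `(z;q)_k = (1-z)(1-zq)...(1-zq^{k-1})` -/
def qpoch (z q : F) (k : ℕ) : F := ∏ j ∈ Finset.range k, (1 - z * q ^ j)

/-- Gaussian binomial coefficient `[n choose k]_q` -/
def qbinom (q : F) (n k : ℕ) : F := qfac q n / (qfac q k * qfac q (n - k))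

/-- Sum over weakly increasing `m`-tuples `lo ≤ i_1 ≤ ... ≤ i_m ≤ n` of
`∏_j q^{i_j}/(1-q^{i_j})` (equal to `1` when `m = 0`). -/
def chainSum (q : F) (lo n m : ℕ) : F :=
  ∑ c ∈ Finset.univ.filter (fun c : Fin m → Fin (n + 1) =>
      (∀ j k : Fin m, j ≤ k → c j ≤ c k) ∧ ∀ j, lo ≤ (c j : ℕ)),
    ∏ j, q ^ (c j : ℕ) / (1 - q ^ (c j : ℕ))

/-- Complete homogeneous symmetric function `h_m` of the variables
`x lo, x (lo+1), ..., x n`. -/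
def hSum {R : Type*} [CommRing R] (x : ℕ → R) (lo n m : ℕ) : R :=
  ∑ c ∈ Finset.univ.filter (fun c : Fin m → Fin (n + 1) =>
      (∀ j k : Fin m, j ≤ k → c j ≤ c k) ∧ ∀ j, lo ≤ (c j : ℕ)),
    ∏ j, x (c j : ℕ)

theorem Fin.monotone_cons {α : Type*} [Preorder α] {n : ℕ} {a : α} {f : Fin n → α} :
    Monotone (Fin.cons a f : Fin (n + 1) → α) ↔ (∀ j, a ≤ f j) ∧ Monotone f := by
  simpa only [monotone_iff_forall_lt] using! Fin.liftFun_cons (α := α) (· ≤ ·)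

def weakChains (lo n m : ℕ) : Finset (Fin m → Fin (n + 1)) :=
  univ.filter (fun c : Fin m → Fin (n + 1) =>
    (∀ j k : Fin m, j ≤ k → c j ≤ c k) ∧ ∀ j, lo ≤ (c j : ℕ))

theorem mem_weakChains {lo n m : ℕ} {c : Fin m → Fin (n + 1)} :
    c ∈ weakChains lo n m ↔ Monotone c ∧ ∀ j, lo ≤ (c j : ℕ) := by
  simp [weakChains, Monotone]

theorem cons_mem_weakChains {lo n m : ℕ} {a : Fin (n + 1)} {t : Fin m → Fin (n + 1)} :
    Fin.cons a t ∈ weakChains lo n (m + 1) ↔ lo ≤ (a : ℕ) ∧ t ∈ weakChains a n m := by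
  simp only [mem_weakChains, Fin.monotone_cons, Fin.forall_fin_succ, Fin.cons_zero, Fin.cons_succ]
  constructor
  · rintro ⟨⟨hat, ht⟩, hlo, -⟩
    exact ⟨hlo, ht, fun j => hat j⟩
  · rintro ⟨hlo, ht, hat⟩
    exact ⟨⟨fun j => hat j, ht⟩, hlo, fun j => hlo.trans (hat j)⟩

section hSum

variable {R : Type*} [CommRing R] (x : ℕ → R)

theorem hSum_eq_sum_weakChains (lo n m : ℕ) :
    hSum x lo n m = ∑ c ∈ weakChains lo n m, ∏ j, x (c j : ℕ) := rfl

theorem hSum_zero (lo n : ℕ) : hSum x lo n 0 = 1 := by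
  simp [hSum_eq_sum_weakChains, weakChains]

theorem hSum_succ (lo n m : ℕ) :
    hSum x lo n (m + 1) = ∑ j ∈ Icc lo n, x j * hSum x j n m := by
  simp only [hSum_eq_sum_weakChains, mul_sum]
  rw [sum_sigma']
  refine sum_bij' (fun c _ => ⟨(c 0 : ℕ), Fin.tail c⟩)
    (fun p hp => Fin.cons ⟨p.1, Nat.lt_succ_of_le (mem_Icc.mp (mem_sigma.mp hp).1).2⟩ p.2)
    (fun c hc => ?_) (fun p hp => ?_) (fun c _ => Fin.cons_self_tail c) (fun p _ => by simp)
    (fun c _ => Fin.prod_univ_succ _)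
  · rw [← Fin.cons_self_tail c, cons_mem_weakChains] at hc
    exact mem_sigma.mpr ⟨mem_Icc.mpr ⟨hc.1, (c 0).is_le⟩, hc.2⟩
  · obtain ⟨hp₁, hp₂⟩ := mem_sigma.mp hp
    exact cons_mem_weakChains.mpr ⟨(mem_Icc.mp hp₁).1, hp₂⟩

theorem sum_mul_mul_hSum (b : ℕ → R) (c : R) {k n : ℕ} (hkn : k ≤ n)
    (hb : ∀ j ∈ Icc k n, ∑ i ∈ Icc k j, b i * x i = b j * c) (m : ℕ) :
    ∑ i ∈ Icc k n, b i * x i * hSum x i n m = b n * c ^ (m + 1) := by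
  induction m with
  | zero => simp [hSum_zero, hb n (right_mem_Icc.mpr hkn)]
  | succ m ih =>
    calc ∑ i ∈ Icc k n, b i * x i * hSum x i n (m + 1)
        = ∑ j ∈ Icc k n, (∑ i ∈ Icc k j, b i * x i) * (x j * hSum x j n m) := by
          simp only [hSum_succ, mul_sum, sum_mul]
          refine sum_comm' fun i j => ?_
          simp only [mem_Icc]
          omega
      _ = c * ∑ j ∈ Icc k n, b j * x j * hSum x j n m := by
          rw [mul_sum]
          refine sum_congr rfl fun j hj => ?_
          rw [hb j hj]
          ring
      _ = b n * c ^ (m + 1 + 1) := by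
          rw [ih]
          ring

end hSum

theorem chainSum_eq_hSum (q : F) (lo n m : ℕ) :
    chainSum q lo n m = hSum (fun i => q ^ i / (1 - q ^ i)) lo n m := rfl

theorem qfac_succ (q : F) (n : ℕ) : qfac q (n + 1) = qfac q n * (1 - q ^ (n + 1)) :=
  prod_range_succ _ n

theorem qbinom_succ_left (q : F) {n k : ℕ} (hkn : k ≤ n) :
    qbinom q (n + 1) k = qbinom q n k * ((1 - q ^ (n + 1)) / (1 - q ^ (n + 1 - k))) := by
  rw [qbinom, qbinom, Nat.sub_add_comm hkn, qfac_succ, qfac_succ, div_mul_div_comm]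
  ring

theorem sum_Icc_qbinom_mul_pow_div (q : F) (hq : ∀ i : ℕ, 1 ≤ i → q ^ i ≠ 1) {k : ℕ}
    (hk : 1 ≤ k) {n : ℕ} (hkn : k ≤ n) :
    ∑ i ∈ Icc k n, qbinom q i k * (q ^ i / (1 - q ^ i)) = qbinom q n k * (q ^ k / (1 - q ^ k)) := by
  have one_sub_pow_ne_zero {i : ℕ} (hi : 1 ≤ i) : (1 : F) - q ^ i ≠ 0 :=
    sub_ne_zero.mpr (hq i hi).symm
  induction n, hkn using Nat.le_induction with
  | base => rw [Icc_self, sum_singleton]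
  | succ n hkn ih =>
    have hpow : q ^ (n + 1) = q ^ k * q ^ (n + 1 - k) := by
      rw [← pow_add, Nat.add_sub_cancel' (by omega)]
    have h₁ := one_sub_pow_ne_zero hk
    have h₂ := one_sub_pow_ne_zero (i := n + 1 - k) (by omega)
    have h₃ := one_sub_pow_ne_zero (i := n + 1) (by omega)
    rw [sum_Icc_succ_top (by omega), ih, qbinom_succ_left q hkn]
    rw [hpow] at h₃ ⊢
    field_simp
    ring

theorem fu_lascoux_lemma2_eq8 (q : F) (k n m : ℕ) (hk : 1 ≤ k) (hkn : k ≤ n)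
    (hm : 1 ≤ m) (hq : ∀ i : ℕ, 1 ≤ i → q ^ i ≠ 1) :
    ∑ i ∈ Finset.Icc k n, qbinom q i k * (q ^ i / (1 - q ^ i)) * chainSum q i n (m - 1)
      = qbinom q n k * q ^ (k * m) / (1 - q ^ k) ^ m := by
  obtain ⟨m, rfl⟩ := Nat.exists_eq_add_of_le' hm
  simp only [Nat.add_sub_cancel, chainSum_eq_hSum]
  rw [sum_mul_mul_hSum _ _ _ hkn
    (fun j hj => sum_Icc_qbinom_mul_pow_div q hq hk (mem_Icc.mp hj).1), div_pow, ← pow_mul,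
    mul_div_assoc]
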